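/- arXiv:0810.5160 — 3 statements merged into one kernel-verified Lean document; each statement's English description precedes it below -/
import Mathlib

section
/- Let g be a Lie algebra, π ∈ ∧²g an r-matrix, and X ∈ g satisfying [X,[X,π]] = λ[X,π] for some scalar λ. Then [[X,π],[X,π]] = 0 in ∧³g. -/
open ExteriorAlgebra

/-- Auxiliary data packaging the Schouten bracket operations on the exterior algebra
`⋀• g` of a Lie algebra `g`, characterized by their values on decomposable elements:
* `bv X` is the Schouten bracket `[X, ·]` with an element of `g`, i.e. the unique
  derivation of `⋀• g` extending `ad X`;
* `sb` is the Schouten bracket `[·,·] : ⋀² g × ⋀² g → ⋀³ g`;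
* `pair ξ η` is the pairing of `ξ ∧ η ∈ ⋀² g*` with `⋀² g`;
* `sharp η ξ = ι_ξ η` is contraction of `η ∈ ⋀² g` with a covector `ξ`. -/
structure SchoutenData (R : Type*) [Field R] (L : Type*) [LieRing L] [LieAlgebra R L] where
  bv : L →ₗ[R] ExteriorAlgebra R L →ₗ[R] ExteriorAlgebra R L
  sb : ExteriorAlgebra R L →ₗ[R] ExteriorAlgebra R L →ₗ[R] ExteriorAlgebra R L
  pair : Module.Dual R L →ₗ[R] Module.Dual R L →ₗ[R] ExteriorAlgebra R L →ₗ[R] R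
  sharp : ExteriorAlgebra R L →ₗ[R] Module.Dual R L →ₗ[R] L
  bv_wedge2 : ∀ X u v : L, bv X (ιMulti R 2 ![u, v]) =
    ιMulti R 2 ![⁅X, u⁆, v] + ιMulti R 2 ![u, ⁅X, v⁆]
  bv_wedge3 : ∀ X u v t : L, bv X (ιMulti R 3 ![u, v, t]) =
    ιMulti R 3 ![⁅X, u⁆, v, t] + ιMulti R 3 ![u, ⁅X, v⁆, t] + ιMulti R 3 ![u, v, ⁅X, t⁆]
  sb_wedge : ∀ u v x y : L, sb (ιMulti R 2 ![u, v]) (ιMulti R 2 ![x, y]) =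
    ιMulti R 3 ![⁅u, x⁆, v, y] + ιMulti R 3 ![u, ⁅v, x⁆, y]
      - ιMulti R 3 ![x, ⁅u, y⁆, v] - ιMulti R 3 ![x, u, ⁅v, y⁆]
  pair_wedge : ∀ (ξ η : Module.Dual R L) (u v : L),
    pair ξ η (ιMulti R 2 ![u, v]) = ξ u * η v - ξ v * η u
  sharp_wedge : ∀ (u v : L) (ξ : Module.Dual R L),
    sharp (ιMulti R 2 ![u, v]) ξ = ξ u • v - ξ v • u


lemma iM2 {L : Type*} [LieRing L] [LieAlgebra ℝ L] (u v : L) :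
    ιMulti ℝ 2 ![u, v] = ι ℝ u * ι ℝ v := by
  rw [ιMulti_apply]; simp [List.ofFn_succ, mul_assoc]

lemma iM3 {L : Type*} [LieRing L] [LieAlgebra ℝ L] (u v t : L) :
    ιMulti ℝ 3 ![u, v, t] = ι ℝ u * (ι ℝ v * ι ℝ t) := by
  rw [ιMulti_apply]; simp [List.ofFn_succ, mul_assoc]

lemma leib_dec {L : Type*} [LieRing L] [LieAlgebra ℝ L] (S : SchoutenData ℝ L)
    (X u v x y : L) :
    S.bv X (S.sb (ιMulti ℝ 2 ![u, v]) (ιMulti ℝ 2 ![x, y])) =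
      S.sb (S.bv X (ιMulti ℝ 2 ![u, v])) (ιMulti ℝ 2 ![x, y]) +
      S.sb (ιMulti ℝ 2 ![u, v]) (S.bv X (ιMulti ℝ 2 ![x, y])) := by
  rw [S.sb_wedge, S.bv_wedge2 X u v, S.bv_wedge2 X x y]
  simp only [map_add, map_sub, LinearMap.add_apply, LinearMap.sub_apply, S.bv_wedge3, S.sb_wedge]
  rw [leibniz_lie X u x, leibniz_lie X v x, leibniz_lie X u y, leibniz_lie X v y]
  simp only [iM3, map_add, add_mul, mul_add]
  abel

lemma bv_mem {L : Type*} [LieRing L] [LieAlgebra ℝ L] (S : SchoutenData ℝ L) (X : L)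
    {a : ExteriorAlgebra ℝ L} (ha : a ∈ Submodule.span ℝ (Set.range (ιMulti ℝ 2))) :
    S.bv X a ∈ Submodule.span ℝ (Set.range (ιMulti ℝ 2)) := by
  induction ha using Submodule.span_induction with
  | mem w hw =>
    obtain ⟨f, rfl⟩ := hw
    rw [show f = ![f 0, f 1] by funext i; fin_cases i <;> rfl, S.bv_wedge2]
    exact add_mem (Submodule.subset_span ⟨_, rfl⟩) (Submodule.subset_span ⟨_, rfl⟩)
  | zero => simp
  | add a b _ _ h1 h2 => rw [map_add]; exact add_mem h1 h2
  | smul r a _ h => rw [map_smul]; exact Submodule.smul_mem _ _ h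

lemma leib {L : Type*} [LieRing L] [LieAlgebra ℝ L] (S : SchoutenData ℝ L) (X : L)
    {a b : ExteriorAlgebra ℝ L} (ha : a ∈ Submodule.span ℝ (Set.range (ιMulti ℝ 2)))
    (hb : b ∈ Submodule.span ℝ (Set.range (ιMulti ℝ 2))) :
    S.bv X (S.sb a b) = S.sb (S.bv X a) b + S.sb a (S.bv X b) := by
  induction ha using Submodule.span_induction with
  | mem w hw =>
    obtain ⟨f, rfl⟩ := hw
    induction hb using Submodule.span_induction with
    | mem z hz =>
      obtain ⟨g, rfl⟩ := hz
      rw [show f = ![f 0, f 1] by funext i; fin_cases i <;> rfl,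
        show g = ![g 0, g 1] by funext i; fin_cases i <;> rfl]
      exact leib_dec S X _ _ _ _
    | zero => simp
    | add a b _ _ h1 h2 => simp only [map_add, h1, h2]; abel
    | smul r a _ h => simp only [map_smul, h, smul_add]
  | zero => simp
  | add a b _ _ h1 h2 =>
    simp only [map_add, LinearMap.add_apply, h1, h2]; abel
  | smul r a _ h =>
    simp only [map_smul, LinearMap.smul_apply, h, smul_add]

/-- If `π ∈ ⋀²g` is an r-matrix and `X ∈ g` satisfies
`[X,[X,π]] = λ [X,π]`, then `[[X,π],[X,π]] = 0` in `⋀³g`. -/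
theorem schouten_bracket_X_pi_self_eq_zero
    {L : Type*} [LieRing L] [LieAlgebra ℝ L] (S : SchoutenData ℝ L)
    (π : ExteriorAlgebra ℝ L) (hπ : π ∈ ⋀[ℝ]^2 L)
    (hr : ∀ Y : L, S.bv Y (S.sb π π) = 0)
    (X : L) (lam : ℝ) (hX : S.bv X (S.bv X π) = lam • S.bv X π) :
    S.sb (S.bv X π) (S.bv X π) = 0 := by
  have hspan : (⋀[ℝ]^2 L : Submodule ℝ (ExteriorAlgebra ℝ L))
      = Submodule.span ℝ (Set.range (ιMulti ℝ 2)) := (ιMulti_span_fixedDegree ℝ 2).symm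
  have hπ' : π ∈ Submodule.span ℝ (Set.range (ιMulti ℝ 2)) := hspan ▸ hπ
  have hbπ : S.bv X π ∈ Submodule.span ℝ (Set.range (ιMulti ℝ 2)) := bv_mem S X hπ'
  have e1 : S.sb (S.bv X π) π + S.sb π (S.bv X π) = 0 := by
    have := hr X
    rwa [leib S X hπ' hπ'] at this
  have e2 : S.bv X (S.sb (S.bv X π) π + S.sb π (S.bv X π)) = 0 := by rw [e1]; simp
  rw [map_add, leib S X hbπ hπ', leib S X hπ' hbπ, hX] at e2
  simp only [map_smul, LinearMap.smul_apply] at e2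
  have e3 : lam • (S.sb (S.bv X π) π + S.sb π (S.bv X π))
      + (2 : ℝ) • S.sb (S.bv X π) (S.bv X π) = 0 := by
    rw [smul_add, two_smul]; linear_combination (norm := abel) e2
  rw [e1, smul_zero, zero_add] at e3
  have h2 : (2 : ℝ) ≠ 0 := two_ne_zero
  exact (smul_eq_zero.mp e3).resolve_left h2
end

section
/- In sl(2,ℝ) with basis e₁,e₂,e₃ satisfying [e₁,e₂]=e₃, [e₂,e₃]=e₁, [e₃,e₁]=-e₂, and π = 2 e₂∧e₃, an element X = a e₁ + b e₂ + c e₃ satisfies [X,[X,π]] = λ[X,π] for some λ ∈ ℝ if and only if X lies in span{e₁, e₂+e₃} or in span{e₁, e₂-e₃} (equivalently, b² = c²) or [X,π]=0. -/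
open ExteriorAlgebra

/-!
Write `X = a e₁ + b e₂ + c e₃` and `eᵢⱼ = eᵢ ∧ eⱼ`. Since `[X,·]` acts on `∧²g` as a derivation,
`[X,π] = -2b e₁₂ - 2c e₁₃` and `[X,[X,π]] = 2(c² - b²) e₂₃ - 2ab e₁₃ - 2ac e₁₂`.
The `e₂₃`-coefficient of `[X,[X,π]]` must therefore vanish when it is a multiple of `[X,π]`,
which gives `b² = c²`; conversely `b = ±c` makes `[X,[X,π]] = ±a [X,π]`.
-/

theorem LinearIndependent.exists_dual_apply_eq_ite {K V ι : Type*} [Field K] [AddCommGroup V]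
    [Module K V] [DecidableEq ι] {v : ι → V} (hv : LinearIndependent K v) :
    ∃ φ : ι → Module.Dual K V, ∀ i j, φ i (v j) = if i = j then 1 else 0 := by
  let B := Module.Basis.sumExtend hv
  have hB : ∀ j, B (Sum.inl j) = v j := fun j => by simp [B, Module.Basis.sumExtend]; rfl
  refine ⟨fun i => B.coord (Sum.inl i), fun i j => ?_⟩
  classical
  rw [← hB, Module.Basis.coord_apply, Module.Basis.repr_self, Finsupp.single_apply]
  simp [eq_comm]

namespace ExteriorAlgebra

variable {R M : Type*} [CommRing R] [AddCommGroup M] [Module R M]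

theorem ιMulti_two (u v : M) : ιMulti R 2 ![u, v] = ι R u * ι R v := by
  simp [ιMulti_apply]

theorem ι_mul_ι_swap (u v : M) : ι R v * ι R u = -(ι R u * ι R v) := by
  rw [eq_neg_iff_add_eq_zero, ι_add_mul_swap]

end ExteriorAlgebra

namespace Sl2

section Bracket

variable {R L : Type*} [CommRing R] [LieRing L] [LieAlgebra R L] {e₁ e₂ e₃ : L} (a b c : R)

theorem lie_e₁ (h12 : ⁅e₁, e₂⁆ = e₃) (h31 : ⁅e₃, e₁⁆ = -e₂) :
    ⁅a • e₁ + b • e₂ + c • e₃, e₁⁆ = -c • e₂ - b • e₃ := by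
  have h21 : ⁅e₂, e₁⁆ = -e₃ := by rw [← lie_skew, h12]
  simp only [add_lie, smul_lie, h21, h31, lie_self, smul_zero]
  module

theorem lie_e₂ (h12 : ⁅e₁, e₂⁆ = e₃) (h23 : ⁅e₂, e₃⁆ = e₁) :
    ⁅a • e₁ + b • e₂ + c • e₃, e₂⁆ = -c • e₁ + a • e₃ := by
  have h32 : ⁅e₃, e₂⁆ = -e₁ := by rw [← lie_skew, h23]
  simp only [add_lie, smul_lie, h12, h32, lie_self, smul_zero]
  module

theorem lie_e₃ (h23 : ⁅e₂, e₃⁆ = e₁) (h31 : ⁅e₃, e₁⁆ = -e₂) :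
    ⁅a • e₁ + b • e₂ + c • e₃, e₃⁆ = b • e₁ + a • e₂ := by
  have h13 : ⁅e₁, e₃⁆ = e₂ := by rw [← lie_skew, h31, neg_neg]
  simp only [add_lie, smul_lie, h13, h23, lie_self, smul_zero]
  module

end Bracket

section Schouten

variable {R L : Type*} [Field R] [LieRing L] [LieAlgebra R L] (S : SchoutenData R L)
  {e₁ e₂ e₃ : L} (a b c : R)

theorem bv_e₂_e₃ (h12 : ⁅e₁, e₂⁆ = e₃) (h23 : ⁅e₂, e₃⁆ = e₁) (h31 : ⁅e₃, e₁⁆ = -e₂) :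
    S.bv (a • e₁ + b • e₂ + c • e₃) (ιMulti R 2 ![e₂, e₃]) =
      -b • ιMulti R 2 ![e₁, e₂] - c • ιMulti R 2 ![e₁, e₃] := by
  rw [S.bv_wedge2, lie_e₂ a b c h12 h23, lie_e₃ a b c h23 h31]
  simp only [ιMulti_two, map_add, map_smul, add_mul, mul_add, smul_mul_assoc, mul_smul_comm,
    ι_sq_zero, smul_zero, add_zero]
  rw [ι_mul_ι_swap e₁ e₂]
  module

theorem bv_e₁_e₂ (h12 : ⁅e₁, e₂⁆ = e₃) (h23 : ⁅e₂, e₃⁆ = e₁) (h31 : ⁅e₃, e₁⁆ = -e₂) :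
    S.bv (a • e₁ + b • e₂ + c • e₃) (ιMulti R 2 ![e₁, e₂]) =
      a • ιMulti R 2 ![e₁, e₃] + b • ιMulti R 2 ![e₂, e₃] := by
  rw [S.bv_wedge2, lie_e₁ a b c h12 h31, lie_e₂ a b c h12 h23]
  simp only [ιMulti_two, map_add, map_sub, map_smul, mul_add, sub_mul, smul_mul_assoc,
    mul_smul_comm, ι_sq_zero, smul_zero, zero_add]
  rw [ι_mul_ι_swap e₂ e₃]
  module

theorem bv_e₁_e₃ (h12 : ⁅e₁, e₂⁆ = e₃) (h23 : ⁅e₂, e₃⁆ = e₁) (h31 : ⁅e₃, e₁⁆ = -e₂) :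
    S.bv (a • e₁ + b • e₂ + c • e₃) (ιMulti R 2 ![e₁, e₃]) =
      a • ιMulti R 2 ![e₁, e₂] - c • ιMulti R 2 ![e₂, e₃] := by
  rw [S.bv_wedge2, lie_e₁ a b c h12 h31, lie_e₃ a b c h23 h31]
  simp only [ιMulti_two, map_add, map_sub, map_smul, mul_add, sub_mul, smul_mul_assoc,
    mul_smul_comm, ι_sq_zero, smul_zero, sub_zero, zero_add]
  module

theorem bv_two_e₂_e₃ (h12 : ⁅e₁, e₂⁆ = e₃) (h23 : ⁅e₂, e₃⁆ = e₁) (h31 : ⁅e₃, e₁⁆ = -e₂) :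
    S.bv (a • e₁ + b • e₂ + c • e₃) ((2 : R) • ιMulti R 2 ![e₂, e₃]) =
      -(2 * b) • ιMulti R 2 ![e₁, e₂] - (2 * c) • ιMulti R 2 ![e₁, e₃] := by
  rw [map_smul, bv_e₂_e₃ S a b c h12 h23 h31]
  module

theorem bv_bv_two_e₂_e₃ (h12 : ⁅e₁, e₂⁆ = e₃) (h23 : ⁅e₂, e₃⁆ = e₁) (h31 : ⁅e₃, e₁⁆ = -e₂) :
    S.bv (a • e₁ + b • e₂ + c • e₃)
        (S.bv (a • e₁ + b • e₂ + c • e₃) ((2 : R) • ιMulti R 2 ![e₂, e₃])) =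
      (2 * (c ^ 2 - b ^ 2)) • ιMulti R 2 ![e₂, e₃] - (2 * a * b) • ιMulti R 2 ![e₁, e₃]
        - (2 * a * c) • ιMulti R 2 ![e₁, e₂] := by
  rw [bv_two_e₂_e₃ S a b c h12 h23 h31, map_sub, map_smul, map_smul,
    bv_e₁_e₂ S a b c h12 h23 h31, bv_e₁_e₃ S a b c h12 h23 h31]
  module

theorem exists_pair_e₂_e₃ (hind : LinearIndependent R ![e₁, e₂, e₃]) :
    ∃ φ ψ : Module.Dual R L, S.pair φ ψ (ιMulti R 2 ![e₁, e₂]) = 0 ∧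
      S.pair φ ψ (ιMulti R 2 ![e₁, e₃]) = 0 ∧ S.pair φ ψ (ιMulti R 2 ![e₂, e₃]) = 1 := by
  obtain ⟨φ, hφ⟩ := hind.exists_dual_apply_eq_ite
  refine ⟨φ 1, φ 2, ?_, ?_, ?_⟩ <;> rw [S.pair_wedge] <;> simp_all [Fin.forall_fin_succ]

end Schouten

end Sl2

open Sl2 in
/-- In `sl(2,ℝ)` with basis `e₁,e₂,e₃` (`[e₁,e₂]=e₃, [e₂,e₃]=e₁,
[e₃,e₁]=-e₂`) and `π = 2 e₂∧e₃`, the element `X = a e₁ + b e₂ + c e₃` satisfies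
`[X,[X,π]] = λ [X,π]` for some `λ ∈ ℝ` iff `b² = c²` (i.e. `X` lies in
`span{e₁, e₂+e₃}` or `span{e₁, e₂-e₃}`) or `[X,π] = 0`. -/
theorem sl2_condi_iff
    {L : Type*} [LieRing L] [LieAlgebra ℝ L] (S : SchoutenData ℝ L)
    (e₁ e₂ e₃ : L) (hind : LinearIndependent ℝ ![e₁, e₂, e₃])
    (h12 : ⁅e₁, e₂⁆ = e₃) (h23 : ⁅e₂, e₃⁆ = e₁) (h31 : ⁅e₃, e₁⁆ = -e₂)
    (a b c : ℝ) :
    (∃ lam : ℝ,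
        S.bv (a • e₁ + b • e₂ + c • e₃)
            (S.bv (a • e₁ + b • e₂ + c • e₃) ((2 : ℝ) • ιMulti ℝ 2 ![e₂, e₃])) =
          lam • S.bv (a • e₁ + b • e₂ + c • e₃) ((2 : ℝ) • ιMulti ℝ 2 ![e₂, e₃])) ↔
      (b ^ 2 = c ^ 2 ∨
        S.bv (a • e₁ + b • e₂ + c • e₃) ((2 : ℝ) • ιMulti ℝ 2 ![e₂, e₃]) = 0) := by
  have hπ := bv_two_e₂_e₃ S a b c h12 h23 h31
  have hXπ := bv_bv_two_e₂_e₃ S a b c h12 h23 h31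
  constructor
  · rintro ⟨lam, hlam⟩
    obtain ⟨φ, ψ, h₁₂, h₁₃, h₂₃⟩ := exists_pair_e₂_e₃ S hind
    rw [hXπ, hπ] at hlam
    have hcoeff := congrArg (S.pair φ ψ) hlam
    simp only [map_sub, map_smul, h₁₂, h₁₃, h₂₃, smul_eq_mul, mul_zero, mul_one,
      sub_zero] at hcoeff
    left
    linarith
  · rintro (hbc | hzero)
    · rcases sq_eq_sq_iff_eq_or_eq_neg.mp hbc with rfl | rfl
      · exact ⟨a, by rw [hXπ, hπ]; module⟩
      · exact ⟨-a, by rw [hXπ, hπ]; module⟩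
    · exact ⟨0, by rw [hzero, map_zero, zero_smul]⟩
end

section
/- In the root system C_n = {±L_i ± L_j : i ≤ j, not both zero} ∖ {0} of sp(2n,ℂ) (with 2L_i = L_i + L_i allowed), where n ≥ 2, a root β satisfies the no-3-string condition (for all α ∈ R, (α+ℤβ)∩R contains no 3 consecutive elements) if and only if β = ±2L_i for some i. -/
/-- `β` satisfies the no-3-string condition w.r.t. the set `R`: for every `α ∈ R`
and every `k : ℤ`, not all of `α+kβ, α+(k+1)β, α+(k+2)β` lie in `R`. -/
def NoThreeString {V : Type*} [AddCommGroup V] [Module ℝ V] (R : Set V) (β : V) : Prop :=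
  ∀ α ∈ R, ∀ k : ℤ,
    ¬(α + (k : ℝ) • β ∈ R ∧ α + ((k : ℝ) + 1) • β ∈ R ∧ α + ((k : ℝ) + 2) • β ∈ R)

/-- The standard basis vector `L i` of `ℝ^n`. -/
noncomputable def Lvec (n : ℕ) (i : Fin n) : Fin n → ℝ := Pi.single i 1

/-- The `Cₙ` root system `{±L_i ± L_j : i < j} ∪ {±2L_i} ⊂ ℝⁿ` of `sp(2n,ℂ)`. -/
noncomputable def CRoot (n : ℕ) : Set (Fin n → ℝ) :=
  {v | (∃ i j : Fin n, i < j ∧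
      (v = Lvec n i + Lvec n j ∨ v = Lvec n i - Lvec n j ∨
        v = -Lvec n i + Lvec n j ∨ v = -Lvec n i - Lvec n j)) ∨
    ∃ i : Fin n, v = (2 : ℝ) • Lvec n i ∨ v = -((2 : ℝ) • Lvec n i)}

lemma mem_pp {n : ℕ} {i j : Fin n} (h : i < j) : Lvec n i + Lvec n j ∈ CRoot n :=
  Or.inl ⟨i, j, h, Or.inl rfl⟩
lemma mem_pm {n : ℕ} {i j : Fin n} (h : i < j) : Lvec n i - Lvec n j ∈ CRoot n :=
  Or.inl ⟨i, j, h, Or.inr (Or.inl rfl)⟩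
lemma mem_mp {n : ℕ} {i j : Fin n} (h : i < j) : -Lvec n i + Lvec n j ∈ CRoot n :=
  Or.inl ⟨i, j, h, Or.inr (Or.inr (Or.inl rfl))⟩
lemma mem_mm {n : ℕ} {i j : Fin n} (h : i < j) : -Lvec n i - Lvec n j ∈ CRoot n :=
  Or.inl ⟨i, j, h, Or.inr (Or.inr (Or.inr rfl))⟩
lemma mem_l {n : ℕ} (i : Fin n) : (2 : ℝ) • Lvec n i ∈ CRoot n := Or.inr ⟨i, Or.inl rfl⟩
lemma mem_ml {n : ℕ} (i : Fin n) : -((2 : ℝ) • Lvec n i) ∈ CRoot n := Or.inr ⟨i, Or.inr rfl⟩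

lemma zero_not_mem (n : ℕ) : (0 : Fin n → ℝ) ∉ CRoot n := by
  rintro (⟨i, j, hij, h | h | h | h⟩ | ⟨i, h | h⟩) <;>
    have := congrFun h i <;>
    simp only [Pi.zero_apply, Pi.add_apply, Pi.sub_apply, Pi.neg_apply, Pi.smul_apply,
      Lvec, Pi.single_apply, smul_eq_mul, if_pos rfl] at this <;>
    first
      | (rw [if_neg hij.ne] at this; norm_num at this)
      | norm_num at this

lemma coord_le {n : ℕ} {v : Fin n → ℝ} (hv : v ∈ CRoot n) (t : Fin n) :
    -2 ≤ v t ∧ v t ≤ 2 := by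
  rcases hv with ⟨i, j, hij, hb | hb | hb | hb⟩ | ⟨i, hb | hb⟩ <;> subst hb <;>
    simp only [Pi.add_apply, Pi.sub_apply, Pi.neg_apply, Pi.smul_apply, Lvec,
      Pi.single_apply, smul_eq_mul] <;> split_ifs <;> norm_num

lemma eq_neg_two {n : ℕ} {v : Fin n → ℝ} (hv : v ∈ CRoot n) (t : Fin n)
    (h2 : v t = -2) : v = -((2 : ℝ) • Lvec n t) := by
  rcases hv with ⟨i, j, hij, hb | hb | hb | hb⟩ | ⟨i, hb | hb⟩ <;> subst hb <;>
    simp only [Pi.add_apply, Pi.sub_apply, Pi.neg_apply, Pi.smul_apply, Lvec,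
      Pi.single_apply, smul_eq_mul] at h2 <;> split_ifs at h2 <;>
    first
      | (rename_i h h'; exact absurd (h.symm.trans h') hij.ne)
      | (rename_i h; subst h; rfl)
      | norm_num at h2

lemma noThreeString_neg {V : Type*} [AddCommGroup V] [Module ℝ V] {R : Set V} {β : V}
    (h : NoThreeString R β) : NoThreeString R (-β) := by
  rintro α hα k ⟨a, b, c⟩
  refine h α hα (-k - 2) ⟨?_, ?_, ?_⟩
  · have e : α + (((-k - 2 : ℤ) : ℝ)) • β = α + ((k : ℝ) + 2) • (-β) := by
      push_cast; module
    rw [e]; exact c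
  · have e : α + (((-k - 2 : ℤ) : ℝ) + 1) • β = α + ((k : ℝ) + 1) • (-β) := by
      push_cast; module
    rw [e]; exact b
  · have e : α + (((-k - 2 : ℤ) : ℝ) + 2) • β = α + (k : ℝ) • (-β) := by
      push_cast; module
    rw [e]; exact a

lemma noThree_long (n : ℕ) (i : Fin n) : NoThreeString (CRoot n) ((2 : ℝ) • Lvec n i) := by
  rintro α hα k ⟨a, b, c⟩
  set β : Fin n → ℝ := (2 : ℝ) • Lvec n i with hβ
  have hβi : β i = 2 := by
    simp [hβ, Lvec, Pi.single_apply]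
  have h0 := (coord_le a i).1
  have h2 := (coord_le c i).2
  have e1 : (α + ((k : ℝ) + 2) • β) i = (α + (k : ℝ) • β) i + 4 := by
    simp only [Pi.add_apply, Pi.smul_apply, smul_eq_mul, hβi]; ring
  have hv0 : (α + (k : ℝ) • β) i = -2 := by
    rw [e1] at h2; linarith
  have hveq := eq_neg_two a i hv0
  have hb0 : α + ((k : ℝ) + 1) • β = 0 := by
    have e : α + ((k : ℝ) + 1) • β = (α + (k : ℝ) • β) + β := by module
    rw [e, hveq]; simp [hβ]
  exact zero_not_mem n (hb0 ▸ b)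

/-- In the root system `Cₙ` (`n ≥ 2`), a root `β` satisfies the
no-3-string condition iff `β = ±2L_i` for some `i`. -/
theorem CRoot_noThreeString_iff (n : ℕ) (hn : 2 ≤ n) :
    ∀ β ∈ CRoot n,
      (NoThreeString (CRoot n) β ↔
        ∃ i : Fin n, β = (2 : ℝ) • Lvec n i ∨ β = -((2 : ℝ) • Lvec n i)) := by
  intro β hβ
  constructor
  · intro h
    rcases hβ with ⟨i, j, hij, hb | hb | hb | hb⟩ | ⟨i, hb⟩
    · exfalso; subst hb
      refine h (-((2 : ℝ) • Lvec n i)) (mem_ml i) 0 ⟨?_, ?_, ?_⟩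
      · have e : -((2 : ℝ) • Lvec n i) + (((0 : ℤ) : ℝ)) • (Lvec n i + Lvec n j)
            = -((2 : ℝ) • Lvec n i) := by push_cast; module
        rw [e]; exact mem_ml i
      · have e : -((2 : ℝ) • Lvec n i) + (((0 : ℤ) : ℝ) + 1) • (Lvec n i + Lvec n j)
            = -Lvec n i + Lvec n j := by push_cast; module
        rw [e]; exact mem_mp hij
      · have e : -((2 : ℝ) • Lvec n i) + (((0 : ℤ) : ℝ) + 2) • (Lvec n i + Lvec n j)
            = (2 : ℝ) • Lvec n j := by push_cast; module
        rw [e]; exact mem_l j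
    · exfalso; subst hb
      refine h ((2 : ℝ) • Lvec n j) (mem_l j) 0 ⟨?_, ?_, ?_⟩
      · have e : (2 : ℝ) • Lvec n j + (((0 : ℤ) : ℝ)) • (Lvec n i - Lvec n j)
            = (2 : ℝ) • Lvec n j := by push_cast; module
        rw [e]; exact mem_l j
      · have e : (2 : ℝ) • Lvec n j + (((0 : ℤ) : ℝ) + 1) • (Lvec n i - Lvec n j)
            = Lvec n i + Lvec n j := by push_cast; module
        rw [e]; exact mem_pp hij
      · have e : (2 : ℝ) • Lvec n j + (((0 : ℤ) : ℝ) + 2) • (Lvec n i - Lvec n j)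
            = (2 : ℝ) • Lvec n i := by push_cast; module
        rw [e]; exact mem_l i
    · exfalso; subst hb
      refine h ((2 : ℝ) • Lvec n i) (mem_l i) 0 ⟨?_, ?_, ?_⟩
      · have e : (2 : ℝ) • Lvec n i + (((0 : ℤ) : ℝ)) • (-Lvec n i + Lvec n j)
            = (2 : ℝ) • Lvec n i := by push_cast; module
        rw [e]; exact mem_l i
      · have e : (2 : ℝ) • Lvec n i + (((0 : ℤ) : ℝ) + 1) • (-Lvec n i + Lvec n j)
            = Lvec n i + Lvec n j := by push_cast; module
        rw [e]; exact mem_pp hij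
      · have e : (2 : ℝ) • Lvec n i + (((0 : ℤ) : ℝ) + 2) • (-Lvec n i + Lvec n j)
            = (2 : ℝ) • Lvec n j := by push_cast; module
        rw [e]; exact mem_l j
    · exfalso; subst hb
      refine h ((2 : ℝ) • Lvec n i) (mem_l i) 0 ⟨?_, ?_, ?_⟩
      · have e : (2 : ℝ) • Lvec n i + (((0 : ℤ) : ℝ)) • (-Lvec n i - Lvec n j)
            = (2 : ℝ) • Lvec n i := by push_cast; module
        rw [e]; exact mem_l i
      · have e : (2 : ℝ) • Lvec n i + (((0 : ℤ) : ℝ) + 1) • (-Lvec n i - Lvec n j)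
            = Lvec n i - Lvec n j := by push_cast; module
        rw [e]; exact mem_pm hij
      · have e : (2 : ℝ) • Lvec n i + (((0 : ℤ) : ℝ) + 2) • (-Lvec n i - Lvec n j)
            = -((2 : ℝ) • Lvec n j) := by push_cast; module
        rw [e]; exact mem_ml j
    · exact ⟨i, hb⟩
  · rintro ⟨i, rfl | rfl⟩
    · exact noThree_long n i
    · exact noThreeString_neg (noThree_long n i)
end
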